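/- arXiv:2506.17698 — 3 statements merged into one kernel-verified Lean document; each statement's English description precedes it below -/
import Mathlib

section
/- Let C ⊆ E be a convex set of diameter at most D (i.e., ‖x - y‖ ≤ D for all x, y ∈ C) with D > 0, let T : E → E map C into C and be γ-Lipschitz on C with γ > 1, and let β ∈ (0,1). Set λ = 1 - β/γ, let x₀ ∈ C, and let the sequence (x_k) be defined by x_{k+1} = λ·x₀ + (1-λ)·T(x_k). Then for any ε with 0 < ε ≤ ‖T(x₀) - x₀‖, taking k = ⌈ln(‖T(x₀) - x₀‖/ε)/ln(1/β)⌉ we have ‖T(x_k) - x_k‖ ≤ (γ/β - 1)·D + ε. -/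
/-!
The iterates stay in `C`, and consecutive differences satisfy
`x (n+2) - x (n+1) = (1 - λ) • (T (x (n+1)) - T (x n))`, so they contract geometrically with
ratio `(1 - λ) γ = β`. Writing `T x_n - x_n = λ • (T x_n - x₀) + (x (n+1) - x n)` bounds the
residual by `λ D + β ^ n ‖T x₀ - x₀‖`; the choice of `k` makes the second term at most `ε`, and
`λ ≤ γ/β - 1` is AM-GM for `β/γ` and its inverse.
-/

open Set

theorem one_sub_le_inv_sub_one {t : ℝ} (ht : 0 < t) : 1 - t ≤ t⁻¹ - 1 := by
  rw [← sub_nonneg]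
  have key : t⁻¹ - 1 - (1 - t) = (t - 1) ^ 2 / t := by field_simp; ring
  rw [key]
  positivity

theorem pow_natCeil_log_div_log_mul_le {β r ε : ℝ} (hβ0 : 0 < β) (hβ1 : β < 1) (hr : 0 < r)
    (hε : 0 < ε) : β ^ ⌈Real.log (r / ε) / Real.log (1 / β)⌉₊ * r ≤ ε := by
  set k := ⌈Real.log (r / ε) / Real.log (1 / β)⌉₊
  have hlog : 0 < Real.log (1 / β) := Real.log_pos (by rw [lt_div_iff₀ hβ0]; linarith)
  have hk : Real.log (r / ε) ≤ k * Real.log (1 / β) :=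
    (div_le_iff₀ hlog).1 (Nat.le_ceil _)
  have hratio : r / ε ≤ (1 / β) ^ k := by
    rwa [← Real.log_le_log_iff (by positivity) (by positivity), Real.log_pow]
  rw [div_le_iff₀ hε, one_div_pow, one_div_mul_eq_div, le_div_iff₀ (by positivity)] at hratio
  linarith

section Halpern

variable {E : Type*} [NormedAddCommGroup E] [NormedSpace ℝ E] {T : E → E} {l : ℝ} {x₀ : E}
  {x : ℕ → E}

theorem halpern_mem {C : Set E} (hC : Convex ℝ C) (hTC : MapsTo T C C) (hx₀ : x₀ ∈ C)
    (hl0 : 0 ≤ l) (hl1 : l ≤ 1) (hx0 : x 0 = x₀)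
    (hx : ∀ n, x (n + 1) = l • x₀ + (1 - l) • T (x n)) (n : ℕ) : x n ∈ C := by
  induction n with
  | zero => rwa [hx0]
  | succ n ih => rw [hx n]; exact hC hx₀ (hTC ih) hl0 (by linarith) (by ring)

theorem norm_halpern_sub_le {C : Set E} {γ : ℝ} (hγ : 0 ≤ γ)
    (hT : ∀ x ∈ C, ∀ y ∈ C, ‖T x - T y‖ ≤ γ * ‖x - y‖) (hl1 : l ≤ 1) (hmem : ∀ n, x n ∈ C)
    (hx0 : x 0 = x₀) (hx : ∀ n, x (n + 1) = l • x₀ + (1 - l) • T (x n)) (n : ℕ) :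
    ‖x (n + 1) - x n‖ ≤ ((1 - l) * γ) ^ n * ((1 - l) * ‖T x₀ - x₀‖) := by
  have h1l : 0 ≤ 1 - l := by linarith
  have hfirst : ‖x 1 - x 0‖ = (1 - l) * ‖T x₀ - x₀‖ := by
    rw [hx 0, hx0, show l • x₀ + (1 - l) • T x₀ - x₀ = (1 - l) • (T x₀ - x₀) by module,
      norm_smul, Real.norm_of_nonneg h1l]
  rw [← hfirst]
  refine le_geom (u := fun n ↦ ‖x (n + 1) - x n‖) (mul_nonneg h1l hγ) n fun m _ ↦ ?_
  have hdiff : x (m + 2) - x (m + 1) = (1 - l) • (T (x (m + 1)) - T (x m)) := by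
    rw [hx (m + 1), hx m]; module
  calc ‖x (m + 2) - x (m + 1)‖ = (1 - l) * ‖T (x (m + 1)) - T (x m)‖ := by
        rw [hdiff, norm_smul, Real.norm_of_nonneg h1l]
    _ ≤ (1 - l) * (γ * ‖x (m + 1) - x m‖) := by gcongr; exact hT _ (hmem _) _ (hmem _)
    _ = (1 - l) * γ * ‖x (m + 1) - x m‖ := by ring

theorem norm_halpern_residual_le (hl0 : 0 ≤ l)
    (hx : ∀ n, x (n + 1) = l • x₀ + (1 - l) • T (x n)) (n : ℕ) :
    ‖T (x n) - x n‖ ≤ l * ‖T (x n) - x₀‖ + ‖x (n + 1) - x n‖ := by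
  have hsplit : T (x n) - x n = l • (T (x n) - x₀) + (x (n + 1) - x n) := by
    rw [hx n]; module
  rw [hsplit]
  refine (norm_add_le _ _).trans ?_
  rw [norm_smul, Real.norm_of_nonneg hl0]

end Halpern

theorem fixed_step_halpern_expansive_error_bound_general
    {E : Type*} [NormedAddCommGroup E] [NormedSpace ℝ E]
    (C : Set E) (hC : Convex ℝ C)
    (D : ℝ) (hdiam : ∀ x ∈ C, ∀ y ∈ C, ‖x - y‖ ≤ D)
    (T : E → E) (hTC : ∀ x ∈ C, T x ∈ C)
    (γ : ℝ) (hγ : 1 < γ)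
    (hT : ∀ x ∈ C, ∀ y ∈ C, ‖T x - T y‖ ≤ γ * ‖x - y‖)
    (β : ℝ) (hβ0 : 0 < β) (hβ1 : β < 1)
    (l : ℝ) (hl : l = 1 - β / γ)
    (x₀ : E) (hx₀C : x₀ ∈ C)
    (x : ℕ → E) (hx0 : x 0 = x₀)
    (hx : ∀ k : ℕ, x (k + 1) = l • x₀ + (1 - l) • T (x k)) :
    ∀ ε : ℝ, 0 < ε → ε ≤ ‖T x₀ - x₀‖ →
      ∀ k : ℕ, k = ⌈Real.log (‖T x₀ - x₀‖ / ε) / Real.log (1 / β)⌉₊ →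
        ‖T (x k) - x k‖ ≤ (γ / β - 1) * D + ε := by
  intro ε hε hεr k hk
  have hγ0 : 0 < γ := by linarith
  have hβγ : β / γ < 1 := (div_lt_one hγ0).2 (by linarith)
  have hl0 : 0 ≤ l := by rw [hl]; linarith
  have hl1 : l ≤ 1 := by rw [hl]; linarith [div_pos hβ0 hγ0]
  have hratio : (1 - l) * γ = β := by rw [hl]; field_simp; ring
  have hmem := halpern_mem hC hTC hx₀C hl0 hl1 hx0 hx
  have hstep : ‖x (k + 1) - x k‖ ≤ ε :=
    calc ‖x (k + 1) - x k‖ ≤ β ^ k * ((1 - l) * ‖T x₀ - x₀‖) := by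
          simpa only [hratio] using norm_halpern_sub_le hγ0.le hT hl1 hmem hx0 hx k
      _ ≤ β ^ k * ‖T x₀ - x₀‖ := by
          gcongr β ^ k * ?_
          exact mul_le_of_le_one_left (norm_nonneg _) (by linarith)
      _ ≤ ε := hk ▸ pow_natCeil_log_div_log_mul_le hβ0 hβ1 (hε.trans_le hεr) hε
  have hlD : l ≤ γ / β - 1 := by
    simpa only [hl, inv_div] using one_sub_le_inv_sub_one (div_pos hβ0 hγ0)
  calc ‖T (x k) - x k‖ ≤ l * ‖T (x k) - x₀‖ + ‖x (k + 1) - x k‖ :=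
        norm_halpern_residual_le hl0 hx k
    _ ≤ (γ / β - 1) * D + ε := by
        gcongr
        · linarith
        · exact hdiam _ (hTC _ (hmem k)) _ hx₀C

/-- Attainable fixed-point error for a γ-Lipschitz operator with γ > 1 mapping
a convex set of diameter at most `D` to itself: with step size `λ = 1 - β/γ`,
after `k = ⌈ln(‖T x₀ - x₀‖/ε)/ln(1/β)⌉` iterations we have
`‖T x_k - x_k‖ ≤ (γ/β - 1) D + ε`. -/
theorem fixed_step_halpern_expansive_error_bound
    {E : Type*} [NormedAddCommGroup E] [NormedSpace ℝ E]
    (C : Set E) (hC : Convex ℝ C)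
    (D : ℝ) (hD0 : 0 < D) (hdiam : ∀ x ∈ C, ∀ y ∈ C, ‖x - y‖ ≤ D)
    (T : E → E) (hTC : ∀ x ∈ C, T x ∈ C)
    (γ : ℝ) (hγ : 1 < γ)
    (hT : ∀ x ∈ C, ∀ y ∈ C, ‖T x - T y‖ ≤ γ * ‖x - y‖)
    (β : ℝ) (hβ0 : 0 < β) (hβ1 : β < 1)
    (l : ℝ) (hl : l = 1 - β / γ)
    (x₀ : E) (hx₀C : x₀ ∈ C)
    (x : ℕ → E) (hx0 : x 0 = x₀)
    (hx : ∀ k : ℕ, x (k + 1) = l • x₀ + (1 - l) • T (x k)) :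
    ∀ ε : ℝ, 0 < ε → ε ≤ ‖T x₀ - x₀‖ →
      ∀ k : ℕ, k = ⌈Real.log (‖T x₀ - x₀‖ / ε) / Real.log (1 / β)⌉₊ →
        ‖T (x k) - x k‖ ≤ (γ / β - 1) * D + ε :=
  fixed_step_halpern_expansive_error_bound_general C hC D hdiam T hTC γ hγ hT β hβ0 hβ1 l hl x₀ hx₀C
    x hx0 hx
end

section
/- Let T : E → E be nonexpansive (1-Lipschitz), let X* be the set of fixed points of T, assumed nonempty, and suppose there exists μ > 0 such that ‖T(x) - x‖ ≥ μ·dist(x, X*) for all x ∈ E, where dist(x, X*) = inf_{y ∈ X*} ‖x - y‖. Let β ∈ (0,1), let λ ∈ (0,1) satisfy λ ≤ (μβ/4)/(1 + μβ/4), let x₀ ∈ E with T(x₀) ≠ x₀, and let the sequence (x_k) be defined by x_{k+1} = λ·x₀ + (1-λ)·T(x_k). Then for k = ⌈ln(2/β)/ln(1/(1-λ))⌉ we have ‖T(x_k) - x_k‖ ≤ β·‖T(x₀) - x₀‖. -/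
/-!
Every Halpern iterate stays within `dist x₀ y` of each fixed point `y`, so
`‖x₀ - x_k‖ ≤ 2 dist(x₀, X⋆)`, while successive differences contract by the factor `1 - λ`.
The update rule gives `(1 - λ)(T x_k - x_k) = (x_{k+1} - x_k) - λ(x₀ - x_k)`, hence
`‖T x_k - x_k‖ ≤ (1 - λ)^k ‖T x₀ - x₀‖ + 2λ/(1 - λ) dist(x₀, X⋆)`. The choice of `k` makes the
first term at most `β/2 ‖T x₀ - x₀‖`; the bound on `λ` and the error bound
`μ dist(x₀, X⋆) ≤ ‖T x₀ - x₀‖` make the second one at most as large.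
-/

open Metric Function Real

section Halpern

variable {E : Type*} [NormedAddCommGroup E] [NormedSpace ℝ E] {T : E → E} {l : ℝ} {x : ℕ → E}

theorem dist_halpern_fixedPt_le (hT : LipschitzWith 1 T) (hl0 : 0 ≤ l) (hl1 : l ≤ 1)
    (hx : ∀ k, x (k + 1) = l • x 0 + (1 - l) • T (x k)) {y : E} (hy : IsFixedPt T y) (n : ℕ) :
    dist (x n) y ≤ dist (x 0) y := by
  induction n with
  | zero => rfl
  | succ n ih =>
    have hTx : T (x n) ∈ closedBall y (dist (x 0) y) := by
      simpa [hy.eq] using hT.mapsTo_closedBall y _ ih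
    rw [hx n, ← mem_closedBall]
    exact convex_closedBall y _ (mem_closedBall.2 le_rfl) hTx hl0 (by linarith) (by ring)

theorem dist_anchor_halpern_le (hT : LipschitzWith 1 T) (hl0 : 0 ≤ l) (hl1 : l ≤ 1)
    (hx : ∀ k, x (k + 1) = l • x 0 + (1 - l) • T (x k)) (hne : (fixedPoints T).Nonempty)
    (n : ℕ) : dist (x 0) (x n) ≤ 2 * infDist (x 0) (fixedPoints T) := by
  rw [← div_le_iff₀' two_pos, le_infDist hne]
  intro y hy
  have := dist_halpern_fixedPt_le hT hl0 hl1 hx hy n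
  linarith [dist_triangle_right (x 0) (x n) y]

theorem norm_halpern_succ_sub_le (hT : LipschitzWith 1 T) (hl1 : l ≤ 1)
    (hx : ∀ k, x (k + 1) = l • x 0 + (1 - l) • T (x k)) (n : ℕ) :
    ‖x (n + 1) - x n‖ ≤ (1 - l) ^ (n + 1) * ‖T (x 0) - x 0‖ := by
  have h1l : 0 ≤ 1 - l := by linarith
  induction n with
  | zero =>
    have h : x 1 - x 0 = (1 - l) • (T (x 0) - x 0) := by rw [hx 0]; module
    rw [h, norm_smul_of_nonneg h1l, pow_one]
  | succ n ih =>
    have h : x (n + 2) - x (n + 1) = (1 - l) • (T (x (n + 1)) - T (x n)) := by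
      rw [hx (n + 1), hx n]; module
    calc ‖x (n + 2) - x (n + 1)‖ = (1 - l) * ‖T (x (n + 1)) - T (x n)‖ := by
          rw [h, norm_smul_of_nonneg h1l]
      _ ≤ (1 - l) * ‖x (n + 1) - x n‖ := by
          gcongr; simpa using hT.norm_sub_le (x (n + 1)) (x n)
      _ ≤ (1 - l) * ((1 - l) ^ (n + 1) * ‖T (x 0) - x 0‖) := by gcongr
      _ = (1 - l) ^ (n + 2) * ‖T (x 0) - x 0‖ := by ring

theorem one_sub_mul_norm_halpern_residual_le (hl0 : 0 ≤ l)
    (hx : ∀ k, x (k + 1) = l • x 0 + (1 - l) • T (x k)) (n : ℕ) :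
    (1 - l) * ‖T (x n) - x n‖ ≤ ‖x (n + 1) - x n‖ + l * ‖x 0 - x n‖ := by
  have h : (1 - l) • (T (x n) - x n) = (x (n + 1) - x n) - l • (x 0 - x n) := by
    rw [hx n]; module
  calc (1 - l) * ‖T (x n) - x n‖ ≤ ‖(1 - l) • (T (x n) - x n)‖ := by
        rw [norm_smul]; gcongr; exact le_abs_self _
    _ ≤ ‖x (n + 1) - x n‖ + l * ‖x 0 - x n‖ := by
        rw [h, ← norm_smul_of_nonneg hl0]; exact norm_sub_le _ _

theorem norm_halpern_residual_le_s10 (hT : LipschitzWith 1 T) (hl0 : 0 ≤ l) (hl1 : l < 1)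
    (hx : ∀ k, x (k + 1) = l • x 0 + (1 - l) • T (x k)) (hne : (fixedPoints T).Nonempty)
    (n : ℕ) :
    ‖T (x n) - x n‖ ≤
      (1 - l) ^ n * ‖T (x 0) - x 0‖ + 2 * (l / (1 - l)) * infDist (x 0) (fixedPoints T) := by
  have h1l : 0 < 1 - l := by linarith
  have hres := one_sub_mul_norm_halpern_residual_le hl0 hx n
  have hstep := norm_halpern_succ_sub_le hT hl1.le hx n
  have hanchor := dist_anchor_halpern_le hT hl0 hl1.le hx hne n
  rw [dist_eq_norm] at hanchor
  rw [← mul_le_mul_iff_right₀ h1l]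
  calc (1 - l) * ‖T (x n) - x n‖
      ≤ (1 - l) ^ (n + 1) * ‖T (x 0) - x 0‖ + l * (2 * infDist (x 0) (fixedPoints T)) := by
        have := mul_le_mul_of_nonneg_left hanchor hl0
        linarith
    _ = (1 - l) * ((1 - l) ^ n * ‖T (x 0) - x 0‖
          + 2 * (l / (1 - l)) * infDist (x 0) (fixedPoints T)) := by
        field_simp; ring

end Halpern

theorem pow_natCeil_log_div_log_le {a b : ℝ} (ha0 : 0 < a) (ha1 : a < 1) (hb : 0 < b) :
    a ^ ⌈log b / log a⌉₊ ≤ b := by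
  have hlog : log a < 0 := log_neg ha0 ha1
  rw [← log_le_log_iff (by positivity) hb, log_pow, ← div_le_iff_of_neg hlog]
  exact Nat.le_ceil _

theorem div_one_sub_le_of_le_div_one_add {l t : ℝ} (ht : 0 ≤ t) (hl1 : l < 1)
    (hl : l ≤ t / (1 + t)) : l / (1 - l) ≤ t := by
  rw [le_div_iff₀ (by linarith)] at hl
  rw [div_le_iff₀ (by linarith)]
  linarith

theorem fixed_step_halpern_local_error_bound_general
    {E : Type*} [NormedAddCommGroup E] [NormedSpace ℝ E]
    (T : E → E) (hT : ∀ x y : E, ‖T x - T y‖ ≤ ‖x - y‖)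
    (Xs : Set E) (hXs : Xs = {y : E | T y = y}) (hne : Xs.Nonempty)
    (μ : ℝ) (hμ : 0 < μ)
    (herr : ∀ x : E, μ * Metric.infDist x Xs ≤ ‖T x - x‖)
    (β : ℝ) (hβ0 : 0 < β)
    (l : ℝ) (hl0 : 0 < l) (hl1 : l < 1)
    (hl : l ≤ (μ * β / 4) / (1 + μ * β / 4))
    (x₀ : E)
    (x : ℕ → E) (hx0 : x 0 = x₀)
    (hx : ∀ k : ℕ, x (k + 1) = l • x₀ + (1 - l) • T (x k)) :
    ∀ k : ℕ,
      k = ⌈Real.log (2 / β) / Real.log (1 / (1 - l))⌉₊ →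
      ‖T (x k) - x k‖ ≤ β * ‖T x₀ - x₀‖ := by
  intro k hk
  subst hx0 hXs
  have hT' : LipschitzWith 1 T := .mk_one fun a b => by simpa only [dist_eq_norm] using hT a b
  have hres := norm_halpern_residual_le_s10 hT' hl0.le hl1 hx hne k
  have hpow : (1 - l) ^ k ≤ β / 2 := by
    rw [hk, one_div, log_inv, ← inv_div β 2, log_inv, neg_div_neg_eq]
    exact pow_natCeil_log_div_log_le (by linarith) (by linarith) (by positivity)
  have hstep := div_one_sub_le_of_le_div_one_add (by positivity) hl1 hl
  have hdist : μ * infDist (x 0) (fixedPoints T) ≤ ‖T (x 0) - x 0‖ := herr (x 0)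
  calc _ ≤ β / 2 * ‖T (x 0) - x 0‖ + 2 * (μ * β / 4) * infDist (x 0) (fixedPoints T) := by
        refine hres.trans ?_; gcongr; exact infDist_nonneg
    _ ≤ β * ‖T (x 0) - x 0‖ := by linarith [mul_le_mul_of_nonneg_left hdist hβ0.le]

/-- Linear error reduction under a local error bound: if `T` is nonexpansive
with a nonempty fixed-point set `X⋆` satisfying `‖T x - x‖ ≥ μ dist(x, X⋆)`,
then the fixed-step Halpern iteration with `λ ≤ (μβ/4)/(1 + μβ/4)` reduces the
fixed-point error by a factor β within `⌈ln(2/β)/ln(1/(1-λ))⌉` iterations. -/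
theorem fixed_step_halpern_local_error_bound
    {E : Type*} [NormedAddCommGroup E] [NormedSpace ℝ E]
    (T : E → E) (hT : ∀ x y : E, ‖T x - T y‖ ≤ ‖x - y‖)
    (Xs : Set E) (hXs : Xs = {y : E | T y = y}) (hne : Xs.Nonempty)
    (μ : ℝ) (hμ : 0 < μ)
    (herr : ∀ x : E, μ * Metric.infDist x Xs ≤ ‖T x - x‖)
    (β : ℝ) (hβ0 : 0 < β) (hβ1 : β < 1)
    (l : ℝ) (hl0 : 0 < l) (hl1 : l < 1)
    (hl : l ≤ (μ * β / 4) / (1 + μ * β / 4))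
    (x₀ : E) (hx₀ : T x₀ ≠ x₀)
    (x : ℕ → E) (hx0 : x 0 = x₀)
    (hx : ∀ k : ℕ, x (k + 1) = l • x₀ + (1 - l) • T (x k)) :
    ∀ k : ℕ,
      k = ⌈Real.log (2 / β) / Real.log (1 / (1 - l))⌉₊ →
      ‖T (x k) - x k‖ ≤ β * ‖T x₀ - x₀‖ :=
  fixed_step_halpern_local_error_bound_general T hT Xs hXs hne μ hμ herr β hβ0 l hl0 hl1 hl x₀ x hx0
    hx
end

section
/- Let C ⊆ E be a convex set of diameter at most D > 0, and let T : E → E map C into C and be α-gradually expansive on C with α ∈ (0, √2 - 1), i.e., ‖T(x) - T(y)‖ ≤ (1 + α·max(‖T(x) - x‖, ‖T(y) - y‖)/D)·‖x - y‖ for all x, y ∈ C. Let β ∈ (0,1) satisfy β² ≥ α·(1+α)/(1-α), let ε̄ > 0, let y₀ ∈ C satisfy ‖T(y₀) - y₀‖ ≤ ε̄, set λ = (β²·ε̄/D)/(1 + β²·ε̄/D), and let the sequence (y_j) be defined by y_{j+1} = λ·y₀ + (1-λ)·T(y_j). Then for every j ≥ 0, ‖T(y_j) - y_j‖ ≤ (1-λ)·(1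 + α + β²)·ε̄. -/
/-!
Write `r_j = ‖y_{j+1} - y_j‖` and `R = (1-λ)(1+α)ε̄`. Since
`T y_j - y_j = λ (T y_j - y₀) + (y_{j+1} - y_j)`, the residual satisfies `‖T y_j - y_j‖ ≤ λD + r_j`,
and `λD = (1-λ)β²ε̄`, so it suffices to show `r_j ≤ R` for all `j`. This holds for `j = 0`, and
`r_{j+1} = (1-λ)‖T y_{j+1} - T y_j‖`. If `r_{j+1} > r_j`, both residuals entering the gradual
expansiveness bound are at most `λD + r_{j+1}`, which gives the inequality
`r_{j+1} ≤ (1-λ)(1 + α(λD + r_{j+1})/D) r_j`, implicit in `r_{j+1}`. The choice of `λ` and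
`β² ≥ α(1+α)/(1-α)` make it force `r_{j+1} ≤ R` as soon as `r_j ≤ R`.
-/

lemma le_of_le_add_mul_mul {p q r r' R : ℝ} (hp : 0 < p) (hq : 0 ≤ q) (hpq : p + q * R ≤ 1)
    (hr : 0 ≤ r) (hrR : r ≤ R) (h : r' ≤ (p + q * r') * r) : r' ≤ R := by
  by_contra! hR
  have hpq' : 0 ≤ p + q * r' := by nlinarith
  have : r' ≤ p * R + q * R * r' := by nlinarith [mul_le_mul_of_nonneg_left hrR hpq']
  nlinarith

lemma div_one_add_self_mem_Ico_and_eq {t l : ℝ} (ht : 0 ≤ t) (hl : l = t / (1 + t)) :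
    l ∈ Set.Ico 0 1 ∧ l = (1 - l) * t := by
  subst hl
  refine ⟨⟨by positivity, (div_lt_one (by positivity)).2 (by linarith)⟩, ?_⟩
  field_simp
  ring

/-- The hypothesis `p + q * R ≤ 1` of `le_of_le_add_mul_mul` for the implicit inequality of
`halpern_norm_succ_sub_le`, at `R = (1 - l) * (1 + α) * ε`. -/
lemma halpern_stepSize_condition {D α β ε l : ℝ} (hD : 0 < D) (hα0 : 0 ≤ α) (hα1 : α < 1)
    (hε : 0 ≤ ε) (hβ : α * (1 + α) / (1 - α) ≤ β ^ 2)
    (hl : l = (β ^ 2 * ε / D) / (1 + β ^ 2 * ε / D)) :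
    (1 - l) * (1 + α * l) + (1 - l) * α / D * ((1 - l) * (1 + α) * ε) ≤ 1 := by
  have hαβ : α * (1 + α) ≤ (1 - α) * β ^ 2 := by
    rw [div_le_iff₀ (by linarith)] at hβ; linarith
  set t := β ^ 2 * ε / D
  obtain ⟨⟨hl0, hl1⟩, hlt⟩ := div_one_add_self_mem_Ico_and_eq (by positivity) hl
  have hαt : α * t + α * (1 + α) * ε / D ≤ t := by
    have : α * (1 + α) * ε / D ≤ (1 - α) * t := by
      rw [mul_div_assoc', ← mul_assoc]; gcongr
    linarith
  calc (1 - l) * (1 + α * l) + (1 - l) * α / D * ((1 - l) * (1 + α) * ε)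
      = (1 - l) * (1 + (1 - l) * (α * t + α * (1 + α) * ε / D)) := by
        linear_combination (1 - l) * α * hlt
    _ ≤ (1 - l) * (1 + 1 * t) := by gcongr; linarith
    _ = 1 := by linear_combination -hlt

section Halpern

variable {E : Type*} [NormedAddCommGroup E] [NormedSpace ℝ E] {T : E → E} {y₀ : E} {l : ℝ}
  {y : ℕ → E}

lemma halpern_mem_s11 {C : Set E} (hC : Convex ℝ C) (hTC : Set.MapsTo T C C) (hy₀ : y₀ ∈ C)
    (hl0 : 0 ≤ l) (hl1 : l ≤ 1) (hy : ∀ j, y (j + 1) = l • y₀ + (1 - l) • T (y j))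
    (hy0 : y 0 ∈ C) (j : ℕ) : y j ∈ C := by
  induction j with
  | zero => exact hy0
  | succ n ih => rw [hy n]; exact hC hy₀ (hTC ih) hl0 (by linarith) (by ring)

lemma halpern_succ_sub_succ (hy : ∀ j, y (j + 1) = l • y₀ + (1 - l) • T (y j)) (j : ℕ) :
    y (j + 2) - y (j + 1) = (1 - l) • (T (y (j + 1)) - T (y j)) := by
  rw [hy (j + 1), hy j]; module

lemma halpern_one_sub_zero (hy : ∀ j, y (j + 1) = l • y₀ + (1 - l) • T (y j)) (hy0 : y 0 = y₀) :
    y 1 - y 0 = (1 - l) • (T y₀ - y₀) := by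
  rw [hy 0, hy0]; module

lemma norm_halpern_residual_le_s11 (hy : ∀ j, y (j + 1) = l • y₀ + (1 - l) • T (y j)) (hl0 : 0 ≤ l)
    {D : ℝ} (j : ℕ) (hD : ‖T (y j) - y₀‖ ≤ D) :
    ‖T (y j) - y j‖ ≤ l * D + ‖y (j + 1) - y j‖ := by
  have hdec : T (y j) - y j = l • (T (y j) - y₀) + (y (j + 1) - y j) := by
    rw [hy j]; module
  calc ‖T (y j) - y j‖ ≤ ‖l • (T (y j) - y₀)‖ + ‖y (j + 1) - y j‖ := hdec ▸ norm_add_le _ _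
    _ ≤ l * D + ‖y (j + 1) - y j‖ := by
      rw [norm_smul, Real.norm_of_nonneg hl0]; gcongr

lemma halpern_norm_succ_sub_le {C : Set E} {D α R : ℝ} (hD : 0 < D) (hα : 0 ≤ α)
    (hdiam : ∀ x ∈ C, ∀ y ∈ C, ‖x - y‖ ≤ D) (hTC : Set.MapsTo T C C)
    (hT : ∀ x ∈ C, ∀ y ∈ C,
      ‖T x - T y‖ ≤ (1 + α * max ‖T x - x‖ ‖T y - y‖ / D) * ‖x - y‖)
    (hy₀ : y₀ ∈ C) (hl0 : 0 ≤ l) (hl1 : l < 1)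
    (hpq : (1 - l) * (1 + α * l) + (1 - l) * α / D * R ≤ 1)
    (hy : ∀ j, y (j + 1) = l • y₀ + (1 - l) • T (y j)) (hmem : ∀ j, y j ∈ C) {n : ℕ}
    (hn : ‖y (n + 1) - y n‖ ≤ R) : ‖y (n + 2) - y (n + 1)‖ ≤ R := by
  set r := ‖y (n + 1) - y n‖
  set r' := ‖y (n + 2) - y (n + 1)‖
  rcases le_or_gt r' r with hr' | hr'
  · exact hr'.trans hn
  have hres (j : ℕ) : ‖T (y j) - y j‖ ≤ l * D + ‖y (j + 1) - y j‖ :=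
    norm_halpern_residual_le_s11 hy hl0 j (hdiam _ (hTC (hmem j)) _ hy₀)
  have hmax : max ‖T (y (n + 1)) - y (n + 1)‖ ‖T (y n) - y n‖ ≤ l * D + r' :=
    max_le (hres (n + 1)) ((hres n).trans (by linarith))
  have h : r' ≤ ((1 - l) * (1 + α * l) + (1 - l) * α / D * r') * r := calc
    r' = ‖(1 - l) • (T (y (n + 1)) - T (y n))‖ := congrArg norm (halpern_succ_sub_succ hy n)
    _ = (1 - l) * ‖T (y (n + 1)) - T (y n)‖ := by
      rw [norm_smul, Real.norm_of_nonneg (by linarith)]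
    _ ≤ (1 - l) * ((1 + α * max ‖T (y (n + 1)) - y (n + 1)‖ ‖T (y n) - y n‖ / D) * r) :=
      mul_le_mul_of_nonneg_left (hT _ (hmem _) _ (hmem _)) (by linarith)
    _ ≤ (1 - l) * ((1 + α * (l * D + r') / D) * r) := by gcongr
    _ = ((1 - l) * (1 + α * l) + (1 - l) * α / D * r') * r := by field_simp; ring
  have hp : 0 < (1 - l) * (1 + α * l) := by have := mul_nonneg hα hl0; nlinarith
  have hq : 0 ≤ (1 - l) * α / D := div_nonneg (mul_nonneg (by linarith) hα) hD.le
  exact le_of_le_add_mul_mul hp hq hpq (norm_nonneg _) hn h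

end Halpern

theorem gradually_expansive_halpern_error_invariant_general
    {E : Type*} [NormedAddCommGroup E] [NormedSpace ℝ E]
    (C : Set E) (hC : Convex ℝ C)
    (D : ℝ) (hD0 : 0 < D) (hdiam : ∀ x ∈ C, ∀ y ∈ C, ‖x - y‖ ≤ D)
    (T : E → E) (hTC : ∀ x ∈ C, T x ∈ C)
    (α : ℝ) (hα0 : 0 < α) (hα1 : α < Real.sqrt 2 - 1)
    (hT : ∀ x ∈ C, ∀ y ∈ C,
      ‖T x - T y‖ ≤ (1 + α * max ‖T x - x‖ ‖T y - y‖ / D) * ‖x - y‖)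
    (β : ℝ)
    (hβ : α * (1 + α) / (1 - α) ≤ β ^ 2)
    (ε : ℝ)
    (y₀ : E) (hy₀C : y₀ ∈ C) (hy₀ : ‖T y₀ - y₀‖ ≤ ε)
    (l : ℝ) (hl : l = (β ^ 2 * ε / D) / (1 + β ^ 2 * ε / D))
    (y : ℕ → E) (hy0 : y 0 = y₀)
    (hy : ∀ j : ℕ, y (j + 1) = l • y₀ + (1 - l) • T (y j)) :
    ∀ j : ℕ, ‖T (y j) - y j‖ ≤ (1 - l) * (1 + α + β ^ 2) * ε := by
  have hα1' : α < 1 := by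
    have : Real.sqrt 2 < 2 := by rw [Real.sqrt_lt' two_pos]; norm_num
    linarith
  have hε0 : 0 ≤ ε := (norm_nonneg _).trans hy₀
  obtain ⟨⟨hl0, hl1⟩, hlt⟩ := div_one_add_self_mem_Ico_and_eq (by positivity) hl
  have hpq := halpern_stepSize_condition hD0 hα0.le hα1' hε0 hβ hl
  have hmem := halpern_mem_s11 hC hTC hy₀C hl0 hl1.le hy (hy0 ▸ hy₀C)
  have hstep (j : ℕ) : ‖y (j + 1) - y j‖ ≤ (1 - l) * (1 + α) * ε := by
    induction j with
    | zero =>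
      rw [halpern_one_sub_zero hy hy0, norm_smul, Real.norm_of_nonneg (by linarith), mul_assoc]
      gcongr
      nlinarith
    | succ n ih =>
      exact halpern_norm_succ_sub_le hD0 hα0.le hdiam hTC hT hy₀C hl0 hl1 hpq hy hmem ih
  intro j
  calc ‖T (y j) - y j‖ ≤ l * D + ‖y (j + 1) - y j‖ :=
        norm_halpern_residual_le_s11 hy hl0 j (hdiam _ (hTC _ (hmem j)) _ hy₀C)
    _ ≤ (1 - l) * (β ^ 2 * ε / D) * D + (1 - l) * (1 + α) * ε := by
      rw [← hlt]; gcongr; exact hstep j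
    _ = (1 - l) * (1 + α + β ^ 2) * ε := by field_simp; ring

/-- For an α-gradually expansive operator (α ∈ (0, √2 - 1)) on a convex set of
diameter at most `D`, with β² ≥ α(1+α)/(1-α) and step size
`λ = (β²ε̄/D)/(1 + β²ε̄/D)`, all fixed-step Halpern iterates started at a point
with fixed-point error at most ε̄ satisfy
`‖T y_j - y_j‖ ≤ (1-λ)(1 + α + β²) ε̄`. -/
theorem gradually_expansive_halpern_error_invariant
    {E : Type*} [NormedAddCommGroup E] [NormedSpace ℝ E]
    (C : Set E) (hC : Convex ℝ C)
    (D : ℝ) (hD0 : 0 < D) (hdiam : ∀ x ∈ C, ∀ y ∈ C, ‖x - y‖ ≤ D)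
    (T : E → E) (hTC : ∀ x ∈ C, T x ∈ C)
    (α : ℝ) (hα0 : 0 < α) (hα1 : α < Real.sqrt 2 - 1)
    (hT : ∀ x ∈ C, ∀ y ∈ C,
      ‖T x - T y‖ ≤ (1 + α * max ‖T x - x‖ ‖T y - y‖ / D) * ‖x - y‖)
    (β : ℝ) (hβ0 : 0 < β) (hβ1 : β < 1)
    (hβ : α * (1 + α) / (1 - α) ≤ β ^ 2)
    (ε : ℝ) (hε : 0 < ε)
    (y₀ : E) (hy₀C : y₀ ∈ C) (hy₀ : ‖T y₀ - y₀‖ ≤ ε)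
    (l : ℝ) (hl : l = (β ^ 2 * ε / D) / (1 + β ^ 2 * ε / D))
    (y : ℕ → E) (hy0 : y 0 = y₀)
    (hy : ∀ j : ℕ, y (j + 1) = l • y₀ + (1 - l) • T (y j)) :
    ∀ j : ℕ, ‖T (y j) - y j‖ ≤ (1 - l) * (1 + α + β ^ 2) * ε :=
  gradually_expansive_halpern_error_invariant_general C hC D hD0 hdiam T hTC α hα0 hα1 hT β hβ ε y₀
    hy₀C hy₀ l hl y hy0 hy
end
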